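/- arXiv:1606.00480 — 2 statements merged into one kernel-verified Lean document; each statement's English description precedes it below -/
import Mathlib

section
/- Given the LDM-3N construction of a triple set T, the decoded triple set {(s,p,o) | ∃ e ∈ E, ε(e) = (s,p) ∧ ε(τ(e)) = (p,o)} (where e ranges over initial edges) is exactly T; that is, the backward transformation applied to the graph produced by the forward transformation recovers the original set of RDF triples. -/
/-- Edge set of the LDM-3N construction: each triple contributes an initial
edge `(t, false)` and a terminal edge `(t, true)`. -/
def ldmEdges {V : Type*} (T : Set (V × V × V)) : Set ((V × V × V) × Bool) :=
  {e | e.1 ∈ T}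

/-- Incidence map ε: `ε (t, false) = (s, p)` and `ε (t, true) = (p, o)` for `t = (s, p, o)`. -/
def ldmEps {V : Type*} (e : (V × V × V) × Bool) : V × V :=
  if e.2 then (e.1.2.1, e.1.2.2) else (e.1.1, e.1.2.1)

/-- Pairing map τ sending each initial edge `(t, false)` to its terminal edge `(t, true)`. -/
def ldmTau {V : Type*} (e : (V × V × V) × Bool) : (V × V × V) × Bool :=
  (e.1, true)

/-- Backward transformation: decoding the LDM-3N graph of `T` (ranging over
initial edges) recovers exactly the original triple set `T`. -/
theorem backward_transformation {V : Type*} (T : Set (V × V × V)) :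
    {t : V × V × V | ∃ e ∈ ldmEdges T, e.2 = false ∧
        ldmEps e = (t.1, t.2.1) ∧ ldmEps (ldmTau e) = (t.2.1, t.2.2)} = T := by
  ext ⟨s, p, o⟩
  constructor
  · rintro ⟨⟨⟨a, b, c⟩, bo⟩, hT, hfalse, h1, h2⟩
    simp only at hfalse
    subst hfalse
    simp only [ldmEps, ldmTau, Bool.false_eq_true, if_false, if_true, Prod.mk.injEq] at h1 h2
    obtain ⟨rfl, rfl⟩ := h1
    obtain ⟨_, rfl⟩ := h2
    exact hT
  · intro hT
    exact ⟨((s, p, o), false), hT, rfl, rfl, rfl⟩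
end

section
/- There exists a vocabulary V with five pairwise distinct terms s₁, p₁, o₁, p₂, o₂ and a triple set T = {(s₁,p₁,o₁), (p₁,p₂,o₂)} such that in the NLAN adjacency relation R_N on V induced by T (R_N a b ↔ ∃ p, (a,p,b) ∈ T), the node o₂ is NOT reachable from s₁ (under the reflexive-transitive closure of R_N), whereas in the LDM-3N adjacency relation R induced by T, the node o₂ IS reachable from s₁. -/
/-- The NLAN adjacency relation on `V` induced by a triple set `T`. -/
def nlanAdj {V : Type*} (T : Set (V × V × V)) (a b : V) : Prop :=
  ∃ p, (a, p, b) ∈ T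

/-- The LDM-3N adjacency relation on `V` induced by a triple set `T`. -/
def ldmAdj {V : Type*} (T : Set (V × V × V)) (a b : V) : Prop :=
  ∃ t ∈ T, (a = t.1 ∧ b = t.2.1) ∨ (a = t.2.1 ∧ b = t.2.2)

/-- There is a vocabulary with five pairwise distinct terms and a two-triple
set in which `o₂` is unreachable from `s₁` in the NLAN graph but reachable in
the LDM-3N graph. -/
theorem nlan_disconnected_ldm_connected :
    ∃ (V : Type) (s₁ p₁ o₁ p₂ o₂ : V),
      ([s₁, p₁, o₁, p₂, o₂] : List V).Pairwise (· ≠ ·) ∧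
      ¬ Relation.ReflTransGen
          (nlanAdj ({(s₁, p₁, o₁), (p₁, p₂, o₂)} : Set (V × V × V))) s₁ o₂ ∧
      Relation.ReflTransGen
          (ldmAdj ({(s₁, p₁, o₁), (p₁, p₂, o₂)} : Set (V × V × V))) s₁ o₂ := by
  refine ⟨Fin 5, 0, 1, 2, 3, 4, by decide, ?_, ?_⟩
  · set T : Set (Fin 5 × Fin 5 × Fin 5) := {((0:Fin 5), (1:Fin 5), (2:Fin 5)), (1, 3, 4)} with hT
    intro h
    have key : ∀ a b : Fin 5, Relation.ReflTransGen (nlanAdj T) a b →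
        (a = 0 ∨ a = 2) → (b = 0 ∨ b = 2) := by
      intro a b h
      induction h with
      | refl => exact id
      | tail _ hadj ih =>
        intro ha
        rcases ih ha with h0 | h2
        · rcases hadj with ⟨p, hp⟩
          rcases hp with h | h
          · right; have := congrArg (·.2.2) h; simpa using this
          · exfalso; subst h0; have := congrArg (·.1) h; simp at this
        · rcases hadj with ⟨p, hp⟩
          rcases hp with h | h <;> (subst h2; have := congrArg (·.1) h; simp at this)
    have := key 0 4 h (Or.inl rfl)
    simp at this
  · have h1 : ldmAdj ({((0:Fin 5), (1:Fin 5), (2:Fin 5)), (1, 3, 4)} : Set _) 0 1 :=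
      ⟨(0, 1, 2), Or.inl rfl, Or.inl ⟨rfl, rfl⟩⟩
    have h2 : ldmAdj ({((0:Fin 5), (1:Fin 5), (2:Fin 5)), (1, 3, 4)} : Set _) 1 3 :=
      ⟨(1, 3, 4), Or.inr rfl, Or.inl ⟨rfl, rfl⟩⟩
    have h3 : ldmAdj ({((0:Fin 5), (1:Fin 5), (2:Fin 5)), (1, 3, 4)} : Set _) 3 4 :=
      ⟨(1, 3, 4), Or.inr rfl, Or.inr ⟨rfl, rfl⟩⟩
    exact .tail (.tail (.single h1) h2) h3
end
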